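/- With the notation of the previous statement, and defining η(x) = ⟨φ', x⟩ · ε_{k-2}(x), the squared inner product satisfies: |⟨γ^{(k)}, ε_{k-1}(x)⟩|² = |⟨γ^{(k-1)}, ε_{k-2}(x)⟩|² − 2⟨ψ, η(x)⟩ · ⟨φ', ψ⟩/‖φ'‖² + |⟨φ', ψ⟩|²·|⟨φ', x⟩|² / ‖φ'‖⁴. -/

import Mathlib

/-!
Since `φ'` is orthogonal to `Φ_{k-2}` and `Φ_{k-1} = Φ_{k-2} ⊔ ℝ φ'`, the projection onto `Φ_{k-1}`
is the projection onto `Φ_{k-2}` plus the projection onto `ℝ φ'`. So each residual with respect to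
`Φ_{k-1}` is the residual with respect to `Φ_{k-2}` with its `φ'`-component removed, which gives
`⟪γ^{(k)}, ε_{k-1}(x)⟫ = ⟪γ^{(k-1)}, ε_{k-2}(x)⟫ - ⟪φ', ψ⟫ ⟪φ', x⟫ / ‖φ'‖²`.
Squaring yields the claim, because `⟪ψ, η(x)⟫ = ⟪φ', x⟫ ⟪γ^{(k-1)}, ε_{k-2}(x)⟫`.
-/

open scoped InnerProductSpace
open RealInnerProductSpace

namespace Submodule

theorem sup_span_singleton_sub_of_mem {R M : Type*} [Ring R] [AddCommGroup M]
    [Module R M] (p : Submodule R M) {k : M} (hk : k ∈ p) (w : M) :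
    p ⊔ span R {w - k} = p ⊔ span R {w} := by
  apply le_antisymm <;> refine sup_le le_sup_left (span_singleton_le_iff_mem _ _ |>.mpr ?_)
  · exact sub_mem (mem_sup_right (mem_span_singleton_self w)) (mem_sup_left hk)
  · simpa using add_mem (mem_sup_right (mem_span_singleton_self (w - k))) (mem_sup_left hk)

variable {𝕜 E : Type*} [RCLike 𝕜] [NormedAddCommGroup E] [InnerProductSpace 𝕜 E]

theorem IsOrtho.starProjection_sup {U V : Submodule 𝕜 E} [U.HasOrthogonalProjection]
    [V.HasOrthogonalProjection] [(U ⊔ V).HasOrthogonalProjection] (h : U ⟂ V) (v : E) :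
    (U ⊔ V).starProjection v = U.starProjection v + V.starProjection v := by
  refine eq_starProjection_of_mem_of_inner_eq_zero
    (add_mem (mem_sup_left (U.starProjection_apply_mem v))
      (mem_sup_right (V.starProjection_apply_mem v))) fun w hw ↦ ?_
  obtain ⟨a, ha, b, hb, rfl⟩ := mem_sup.mp hw
  have hVa : ⟪V.starProjection v, a⟫_𝕜 = 0 := h.symm.inner_eq (V.starProjection_apply_mem v) ha
  have hUb : ⟪U.starProjection v, b⟫_𝕜 = 0 := h.inner_eq (U.starProjection_apply_mem v) hb
  have hva : ⟪v - (U.starProjection v + V.starProjection v), a⟫_𝕜 = 0 := by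
    rw [← sub_sub, inner_sub_left, starProjection_inner_eq_zero v a ha, hVa, sub_zero]
  have hvb : ⟪v - (U.starProjection v + V.starProjection v), b⟫_𝕜 = 0 := by
    rw [add_comm, ← sub_sub, inner_sub_left, starProjection_inner_eq_zero v b hb, hUb, sub_zero]
  rw [inner_add_right, hva, hvb, add_zero]

theorem sub_starProjection_sup_span_singleton {K : Submodule 𝕜 E} {u : E}
    [K.HasOrthogonalProjection] [(K ⊔ 𝕜 ∙ u).HasOrthogonalProjection] (hu : u ∈ Kᗮ) (v : E) :
    v - (K ⊔ 𝕜 ∙ u).starProjection v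
      = (v - K.starProjection v) - (⟪u, v⟫_𝕜 / ((‖u‖ ^ 2 : ℝ) : 𝕜)) • u := by
  have h : K ⟂ 𝕜 ∙ u :=
    (isOrtho_orthogonal_right K).mono_right ((span_singleton_le_iff_mem _ _).mpr hu)
  rw [h.starProjection_sup, starProjection_singleton, sub_add_eq_sub_sub]

theorem inner_sub_starProjection_of_mem_orthogonal {K : Submodule 𝕜 E}
    [K.HasOrthogonalProjection] {u : E} (hu : u ∈ Kᗮ) (v : E) :
    ⟪u, v - K.starProjection v⟫_𝕜 = ⟪u, v⟫_𝕜 := by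
  rw [inner_sub_right, inner_left_of_mem_orthogonal (K.starProjection_apply_mem _) hu, sub_zero]

theorem inner_sub_starProjection_right (K : Submodule 𝕜 E) [K.HasOrthogonalProjection] (v w : E) :
    ⟪v, w - K.starProjection w⟫_𝕜 = ⟪v - K.starProjection v, w - K.starProjection w⟫_𝕜 := by
  rw [inner_sub_left, inner_right_of_mem_orthogonal (K.starProjection_apply_mem _)
    (sub_starProjection_mem_orthogonal w), sub_zero]

end Submodule

theorem real_inner_sub_smul_sub_smul {E : Type*} [NormedAddCommGroup E] [InnerProductSpace ℝ E]
    (a b u : E) :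
    ⟪a - (⟪u, a⟫ / ‖u‖ ^ 2) • u, b - (⟪u, b⟫ / ‖u‖ ^ 2) • u⟫
      = ⟪a, b⟫ - ⟪u, a⟫ * ⟪u, b⟫ / ‖u‖ ^ 2 := by
  rcases eq_or_ne u 0 with rfl | hu
  · simp
  have : ‖u‖ ^ 2 ≠ 0 := by positivity
  simp only [inner_sub_left, inner_sub_right, real_inner_smul_left, real_inner_smul_right,
    real_inner_self_eq_norm_sq, real_inner_comm a u, real_inner_comm b u]
  field_simp
  ring

theorem stmt_15_general (n : ℕ) (Φk2 Φk1 : Submodule ℝ (EuclideanSpace ℝ (Fin n)))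
    (φk1 : EuclideanSpace ℝ (Fin n))
    (hΦ : Φk1 = Φk2 ⊔ Submodule.span ℝ {φk1})
    (φ' : EuclideanSpace ℝ (Fin n))
    (hφ' : φ' = φk1 - (Submodule.orthogonalProjectionOnto Φk2 φk1 : EuclideanSpace ℝ (Fin n)))
    (ψ x γk γk1 εk1 εk2 η : EuclideanSpace ℝ (Fin n))
    (hγk : γk = ψ - (Submodule.orthogonalProjectionOnto Φk1 ψ : EuclideanSpace ℝ (Fin n)))
    (hγk1 : γk1 = ψ - (Submodule.orthogonalProjectionOnto Φk2 ψ : EuclideanSpace ℝ (Fin n)))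
    (hεk1 : εk1 = x - (Submodule.orthogonalProjectionOnto Φk1 x : EuclideanSpace ℝ (Fin n)))
    (hεk2 : εk2 = x - (Submodule.orthogonalProjectionOnto Φk2 x : EuclideanSpace ℝ (Fin n)))
    (hη : η = ⟪φ', x⟫ • εk2) :
    |⟪γk, εk1⟫| ^ 2 =
      |⟪γk1, εk2⟫| ^ 2 - 2 * ⟪ψ, η⟫ * (⟪φ', ψ⟫ / ‖φ'‖ ^ 2)
        + |⟪φ', ψ⟫| ^ 2 * |⟪φ', x⟫| ^ 2 / ‖φ'‖ ^ 4 := by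
  simp only [Submodule.coe_orthogonalProjectionOnto_apply] at hφ' hγk hγk1 hεk1 hεk2
  have hφ'_orth : φ' ∈ Φk2ᗮ := hφ' ▸ Φk2.sub_starProjection_mem_orthogonal φk1
  have hΦ' : Φk1 = Φk2 ⊔ ℝ ∙ φ' := by
    rw [hΦ, hφ', Φk2.sup_span_singleton_sub_of_mem (Φk2.starProjection_apply_mem φk1)]
  have hresidual (v : EuclideanSpace ℝ (Fin n)) : v - Φk1.starProjection v
      = (v - Φk2.starProjection v) - (⟪φ', v - Φk2.starProjection v⟫ / ‖φ'‖ ^ 2) • φ' := by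
    subst hΦ'
    rw [Submodule.sub_starProjection_sup_span_singleton hφ'_orth,
      Submodule.inner_sub_starProjection_of_mem_orthogonal hφ'_orth]
    rfl
  have hinner : ⟪γk, εk1⟫ = ⟪γk1, εk2⟫ - ⟪φ', ψ⟫ * ⟪φ', x⟫ / ‖φ'‖ ^ 2 := by
    rw [hγk, hεk1, hresidual, hresidual, real_inner_sub_smul_sub_smul,
      Submodule.inner_sub_starProjection_of_mem_orthogonal hφ'_orth,
      Submodule.inner_sub_starProjection_of_mem_orthogonal hφ'_orth, ← hγk1, ← hεk2]
  have hη' : ⟪ψ, η⟫ = ⟪φ', x⟫ * ⟪γk1, εk2⟫ := by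
    rw [hη, real_inner_smul_right, hγk1, hεk2, Submodule.inner_sub_starProjection_right]
  rw [hinner, hη', sq_abs, sq_abs, sq_abs, sq_abs]
  ring

theorem stmt_15 (n : ℕ) (Φk2 Φk1 : Submodule ℝ (EuclideanSpace ℝ (Fin n)))
    (φk1 : EuclideanSpace ℝ (Fin n))
    (hΦ : Φk1 = Φk2 ⊔ Submodule.span ℝ {φk1})
    (φ' : EuclideanSpace ℝ (Fin n))
    (hφ' : φ' = φk1 - (Submodule.orthogonalProjectionOnto Φk2 φk1 : EuclideanSpace ℝ (Fin n)))
    (hφ'0 : φ' ≠ 0)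
    (ψ x γk γk1 εk1 εk2 η : EuclideanSpace ℝ (Fin n))
    (hγk : γk = ψ - (Submodule.orthogonalProjectionOnto Φk1 ψ : EuclideanSpace ℝ (Fin n)))
    (hγk1 : γk1 = ψ - (Submodule.orthogonalProjectionOnto Φk2 ψ : EuclideanSpace ℝ (Fin n)))
    (hεk1 : εk1 = x - (Submodule.orthogonalProjectionOnto Φk1 x : EuclideanSpace ℝ (Fin n)))
    (hεk2 : εk2 = x - (Submodule.orthogonalProjectionOnto Φk2 x : EuclideanSpace ℝ (Fin n)))
    (hη : η = ⟪φ', x⟫ • εk2) :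
    |⟪γk, εk1⟫| ^ 2 =
      |⟪γk1, εk2⟫| ^ 2 - 2 * ⟪ψ, η⟫ * (⟪φ', ψ⟫ / ‖φ'‖ ^ 2)
        + |⟪φ', ψ⟫| ^ 2 * |⟪φ', x⟫| ^ 2 / ‖φ'‖ ^ 4 :=
  stmt_15_general n Φk2 Φk1 φk1 hΦ φ' hφ' ψ x γk γk1 εk1 εk2 η hγk hγk1 hεk1 hεk2 hη
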